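/- Let k ≥ 1 be an integer, α ∈ [−1, 0], and let z^k D_α = {z^k f : f ∈ D_α}, a closed subspace of D_α with the inherited norm. Then the operator M_{z^k} of multiplication by z^k has the wandering subspace property in z^k D_α: every closed M_{z^k}-invariant subspace N with N ⊆ z^k D_α satisfies N = [N ⊖ z^k N]_{M_{z^k}}. -/

import Mathlib

open MeasureTheory

/-- The measure on `ℕ` giving the singleton `{n}` mass `(n+1)^α`. -/
noncomputable def dirichletMeasure (α : ℝ) : Measure ℕ :=
  Measure.count.withDensity (fun n => ENNReal.ofReal ((n + 1 : ℝ) ^ α))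

attribute [irreducible] dirichletMeasure

/-- The Dirichlet-type space `D_α`, realized as the weighted `ℓ²` space of Taylor
coefficients: `‖f‖_α² = ∑ |a_n|² (n+1)^α`.  `α = -1` is the Bergman space `A²`,
`α = 0` is the Hardy space `H²`. -/
noncomputable abbrev Dspace (α : ℝ) : Type := Lp ℂ 2 (dirichletMeasure α)

/-- `T` acts on `D_α` as multiplication by `z^k`, i.e. as the `k`-step coefficient shift. -/
def IsShiftBy (α : ℝ) (k : ℕ) (T : Dspace α →L[ℂ] Dspace α) : Prop :=
  ∀ f : Dspace α, ∀ n : ℕ, (T f : ℕ → ℂ) n = if k ≤ n then (f : ℕ → ℂ) (n - k) else 0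

/-- `[E]_T`: the smallest closed `T`-invariant subspace containing the set `E`. -/
def invGen {H : Type*} [NormedAddCommGroup H] [InnerProductSpace ℂ H]
    (T : H →L[ℂ] H) (E : Set H) : Submodule ℂ H :=
  sInf {N : Submodule ℂ H | IsClosed (N : Set H) ∧ (∀ x ∈ N, T x ∈ N) ∧ E ⊆ N}

/-- `M ⊖ TM`: the orthogonal complement in `M` of (the closure of) `T M`. -/
noncomputable def wanderingPart {H : Type*} [NormedAddCommGroup H] [InnerProductSpace ℂ H]
    (T : H →L[ℂ] H) (M : Submodule ℂ H) : Submodule ℂ H :=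
  M ⊓ (Submodule.map (↑T : H →ₗ[ℂ] H) M)ᗮ

/-!
Write `w n = (n + 1) ^ α` for the weights of `D_α`, so that `M_{z^k}` is the weighted shift `T`.
For `α ∈ [-1, 0]` the weights decrease, so `T` is a contraction that is bounded below, and
`1 / w` is concave; coefficientwise, that concavity gives
`2 Re ⟪T v, z + T x⟫ ≤ 2 ‖T v‖² + ‖T z‖² + ‖x‖²`.

Let `W = [N ⊖ T N]_T` and `y ∈ N ⊖ W`. Iterate the compression `S = P_N T*` starting at `y`.
Every iterate `y j` stays in `N ⊖ W ⊆ T N`, say `y j = T (u j)`, and the inequality at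
`u (j + 1), u j, y (j + 2)` makes `j ↦ ‖y j‖²` concave. Being nonnegative and nonincreasing, it is
constant, which forces `T (y (j + 1)) = y j` for all `j`. So `y ∈ ⋂ₙ Tⁿ D_α = 0`.
-/

open scoped InnerProduct InnerProductSpace
open RCLike

theorem monotone_of_nonneg_of_add_le_two_mul {b : ℕ → ℝ} (h0 : ∀ j, 0 ≤ b j)
    (hb : ∀ j, b j + b (j + 2) ≤ 2 * b (j + 1)) : Monotone b := by
  refine monotone_nat_of_le_succ fun J => not_lt.1 fun hJ => ?_
  set d := b (J + 1) - b J
  have hdrop : ∀ n, b (J + n + 1) - b (J + n) ≤ d ∧ b (J + n) ≤ b J + n * d := by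
    intro n
    induction n with
    | zero => simp [d]
    | succ n ih =>
      rw [← add_assoc]
      have hconc := hb (J + n)
      refine ⟨by linarith [ih.1], ?_⟩
      push_cast
      linarith [ih.1, ih.2]
  obtain ⟨n, hn⟩ := exists_nat_gt (b J / -d)
  rw [div_lt_iff₀ (by linarith)] at hn
  linarith [(hdrop n).2, h0 (J + n)]

section RCLike

variable {𝕜 E : Type*} [RCLike 𝕜] [NormedAddCommGroup E] [InnerProductSpace 𝕜 E]

theorem two_mul_re_inner_le {p q r : ℝ} (hp : 0 ≤ p) (hq : 0 ≤ q) (hr : r ^ 2 ≤ p * q)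
    (a b : E) : 2 * (r * re ⟪a, b⟫_𝕜) ≤ p * ‖a‖ ^ 2 + q * ‖b‖ ^ 2 := by
  have hab : r * re ⟪a, b⟫_𝕜 ≤ |r| * (‖a‖ * ‖b‖) :=
    (le_abs_self _).trans <| by
      rw [abs_mul]
      exact mul_le_mul_of_nonneg_left ((abs_re_le_norm _).trans (norm_inner_le_norm a b))
        (abs_nonneg r)
  have hr' : |r| ≤ √p * √q := by
    rw [← Real.sqrt_mul hp, ← Real.sqrt_sq_eq_abs]
    exact Real.sqrt_le_sqrt hr
  nlinarith [sq_nonneg (√p * ‖a‖ - √q * ‖b‖), Real.sq_sqrt hp, Real.sq_sqrt hq,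
    mul_nonneg (norm_nonneg a) (norm_nonneg b)]

theorem two_mul_re_inner_add_re_inner_le {A B C : ℝ} (hA : 0 < A) (hB : 0 < B) (hC : 0 < C)
    (h : B / A + B / C ≤ 2) (a b c : E) :
    2 * (B * re ⟪a, b⟫_𝕜 + B * re ⟪a, c⟫_𝕜) ≤
      2 * (B * ‖a‖ ^ 2) + C * ‖b‖ ^ 2 + A * ‖c‖ ^ 2 := by
  -- split the coefficient `2 * B` of `‖a‖ ^ 2` as `(2 * B - B ^ 2 / A) + B ^ 2 / A`
  have key : B ^ 2 ≤ (2 * B - B ^ 2 / A) * C :=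
    calc B ^ 2 = B * C * (B / C) := by field_simp
      _ ≤ B * C * (2 - B / A) := by gcongr; linarith
      _ = (2 * B - B ^ 2 / A) * C := by ring
  have hp : 0 ≤ 2 * B - B ^ 2 / A := (mul_nonneg_iff_of_pos_right hC).1 ((sq_nonneg B).trans key)
  have hb := two_mul_re_inner_le (𝕜 := 𝕜) hp hC.le key a b
  have hc := two_mul_re_inner_le (𝕜 := 𝕜) (p := B ^ 2 / A) (by positivity) hA.le
    (div_mul_cancel₀ _ hA.ne').ge a c
  linarith

theorem Submodule.mem_of_mem_orthogonal_inf_orthogonal {K N : Submodule 𝕜 E}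
    [K.HasOrthogonalProjection] (hKN : K ≤ N) {y : E} (hyN : y ∈ N) (hy : y ∈ (N ⊓ Kᗮ)ᗮ) :
    y ∈ K := by
  set r := y - K.starProjection y
  have hr : r ∈ N ⊓ Kᗮ :=
    ⟨N.sub_mem hyN (hKN (K.starProjection_apply_mem y)), K.sub_starProjection_mem_orthogonal y⟩
  have hr0 : ⟪r, r⟫_𝕜 = 0 := by
    rw [inner_sub_right, Submodule.inner_right_of_mem_orthogonal hr hy,
      Submodule.inner_left_of_mem_orthogonal (K.starProjection_apply_mem y) hr.2, sub_zero]
  exact Submodule.starProjection_eq_self_iff.1 (sub_eq_zero.1 (inner_self_eq_zero.1 hr0)).symm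

theorem eq_of_norm_le_of_re_inner_eq_norm_sq {a b : E} (hab : ‖a‖ ≤ ‖b‖)
    (h : re ⟪b, a⟫_𝕜 = ‖b‖ ^ 2) : a = b := by
  have hsq : ‖a - b‖ ^ 2 ≤ 0 := by
    rw [norm_sub_sq (𝕜 := 𝕜), ← inner_conj_symm, conj_re, h]
    nlinarith [norm_nonneg a]
  exact sub_eq_zero.1 (norm_eq_zero.1 (pow_eq_zero_iff two_ne_zero |>.1
    (le_antisymm hsq (sq_nonneg _))))

end RCLike

section WanderingSubspace

variable {H : Type*} [NormedAddCommGroup H] [InnerProductSpace ℂ H]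

theorem invGen_le {T : H →L[ℂ] H} {E : Set H} {N : Submodule ℂ H} (hN : IsClosed (N : Set H))
    (hNinv : ∀ x ∈ N, T x ∈ N) (hE : E ⊆ N) : invGen T E ≤ N :=
  sInf_le ⟨hN, hNinv, hE⟩

theorem isClosed_invGen (T : H →L[ℂ] H) (E : Set H) : IsClosed (invGen T E : Set H) := by
  rw [invGen, Submodule.coe_sInf]
  exact isClosed_biInter fun _ hN => hN.1

theorem apply_mem_invGen {T : H →L[ℂ] H} {E : Set H} {x : H} (hx : x ∈ invGen T E) :
    T x ∈ invGen T E :=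
  Submodule.mem_sInf.2 fun _ hN => hN.2.1 x (Submodule.mem_sInf.1 hx _ hN)

theorem subset_invGen (T : H →L[ℂ] H) (E : Set H) : E ⊆ invGen T E :=
  fun _ hx => Submodule.mem_sInf.2 fun _ hN => hN.2.2 hx

variable [CompleteSpace H]

noncomputable def compressedAdjoint (T : H →L[ℂ] H) (N : Submodule ℂ H)
    [N.HasOrthogonalProjection] : H →L[ℂ] H :=
  N.starProjection ∘L T†

section Compression

variable {T : H →L[ℂ] H} {N : Submodule ℂ H} [N.HasOrthogonalProjection]

theorem compressedAdjoint_apply_mem (x : H) : compressedAdjoint T N x ∈ N :=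
  N.starProjection_apply_mem _

theorem inner_compressedAdjoint_apply {u : H} (hu : u ∈ N) (x : H) :
    ⟪compressedAdjoint T N x, u⟫_ℂ = ⟪x, T u⟫_ℂ := by
  rw [compressedAdjoint, ContinuousLinearMap.comp_apply,
    Submodule.inner_starProjection_left_eq_right, Submodule.starProjection_eq_self_iff.2 hu,
    ContinuousLinearMap.adjoint_inner_left]

theorem norm_compressedAdjoint_apply_le (hT : ‖T‖ ≤ 1) (x : H) :
    ‖compressedAdjoint T N x‖ ≤ ‖x‖ := by
  have hTadj : ‖(T†)‖ ≤ 1 := by rwa [LinearIsometryEquiv.norm_map]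
  calc ‖compressedAdjoint T N x‖ ≤ ‖(T†) x‖ := N.norm_starProjection_apply_le _
    _ ≤ ‖x‖ := by simpa using (T†).le_of_opNorm_le hTadj x

theorem compressedAdjoint_mem_orthogonal {W : Submodule ℂ H} (hWN : W ≤ N)
    (hWinv : ∀ x ∈ W, T x ∈ W) {x : H} (hx : x ∈ Wᗮ) : compressedAdjoint T N x ∈ Wᗮ := by
  refine (Submodule.mem_orthogonal' _ _).2 fun w hw => ?_
  rw [inner_compressedAdjoint_apply (hWN hw)]
  exact Submodule.inner_left_of_mem_orthogonal (hWinv w hw) hx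

theorem norm_sq_add_norm_sq_compressedAdjoint_le
    (hT_ineq : ∀ v z x : H, 2 * re ⟪T v, z + T x⟫_ℂ ≤ 2 * ‖T v‖ ^ 2 + ‖T z‖ ^ 2 + ‖x‖ ^ 2)
    {u₀ u₁ : H} (hu₀ : u₀ ∈ N) (hu₁ : T u₁ = compressedAdjoint T N (T u₀)) :
    ‖T u₀‖ ^ 2 + ‖compressedAdjoint T N (compressedAdjoint T N (T u₀))‖ ^ 2 ≤
      2 * ‖compressedAdjoint T N (T u₀)‖ ^ 2 := by
  set y₂ := compressedAdjoint T N (compressedAdjoint T N (T u₀))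
  have h := hT_ineq u₁ u₀ y₂
  have e₀ : ⟪T u₁, u₀⟫_ℂ = ⟪T u₀, T u₀⟫_ℂ := by rw [hu₁, inner_compressedAdjoint_apply hu₀]
  have e₂ : ⟪T u₁, T y₂⟫_ℂ = ⟪y₂, y₂⟫_ℂ := by
    rw [hu₁, ← inner_compressedAdjoint_apply (compressedAdjoint_apply_mem _)]
  rw [inner_add_right, e₀, e₂, hu₁, map_add, inner_self_eq_norm_sq, inner_self_eq_norm_sq] at h
  linarith

theorem eq_zero_of_mem_orthogonal_of_wanderingPart_le
    [(N.map (T : H →ₗ[ℂ] H)).HasOrthogonalProjection] (hT_norm : ‖T‖ ≤ 1)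
    (hT_ineq : ∀ v z x : H, 2 * re ⟪T v, z + T x⟫_ℂ ≤ 2 * ‖T v‖ ^ 2 + ‖T z‖ ^ 2 + ‖x‖ ^ 2)
    (hT_analytic : ⨅ n : ℕ, LinearMap.range ((T ^ n : H →L[ℂ] H) : H →ₗ[ℂ] H) = ⊥)
    (hNinv : ∀ x ∈ N, T x ∈ N)
    {W : Submodule ℂ H} (hWN : W ≤ N) (hWinv : ∀ x ∈ W, T x ∈ W)
    (hW : wanderingPart T N ≤ W) {y : H} (hyN : y ∈ N) (hyW : y ∈ Wᗮ) : y = 0 := by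
  set S := compressedAdjoint T N
  set Y : ℕ → H := fun j => S^[j] y
  have hY_succ (j : ℕ) : Y (j + 1) = S (Y j) := Function.iterate_succ_apply' _ _ _
  have hYN (j : ℕ) : Y j ∈ N := by
    cases j with
    | zero => exact hyN
    | succ j => rw [hY_succ]; exact compressedAdjoint_apply_mem _
  have hYW (j : ℕ) : Y j ∈ Wᗮ := by
    induction j with
    | zero => exact hyW
    | succ j ih => rw [hY_succ]; exact compressedAdjoint_mem_orthogonal hWN hWinv ih
  have hY_range (j : ℕ) : ∃ u ∈ N, T u = Y j :=
    Submodule.mem_map.1 <| Submodule.mem_of_mem_orthogonal_inf_orthogonal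
      (by rintro _ ⟨u, hu, rfl⟩; exact hNinv u hu) (hYN j) (Submodule.orthogonal_le hW (hYW j))
  choose u huN hTu using hY_range
  have hanti : Antitone fun j => ‖Y j‖ ^ 2 := antitone_nat_of_succ_le fun j => by
    rw [hY_succ]
    exact pow_le_pow_left₀ (norm_nonneg _) (norm_compressedAdjoint_apply_le hT_norm _) 2
  have hmono : Monotone fun j => ‖Y j‖ ^ 2 :=
    monotone_of_nonneg_of_add_le_two_mul (fun _ => sq_nonneg _) fun j => by
      have h := norm_sq_add_norm_sq_compressedAdjoint_le hT_ineq (huN j)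
        (by rw [hTu (j + 1), hTu j, hY_succ])
      rwa [hTu j, ← hY_succ, ← hY_succ] at h
  have hchain (j : ℕ) : T (Y (j + 1)) = Y j := by
    have hnorm : ‖Y (j + 1)‖ = ‖Y j‖ := by
      have := le_antisymm (hanti (Nat.le_succ j)) (hmono (Nat.le_succ j))
      exact (pow_left_inj₀ (norm_nonneg _) (norm_nonneg _) two_ne_zero).1 this
    refine eq_of_norm_le_of_re_inner_eq_norm_sq (𝕜 := ℂ) ?_ ?_
    · simpa [hnorm] using T.le_of_opNorm_le hT_norm (Y (j + 1))
    · rw [← inner_compressedAdjoint_apply (hYN (j + 1)), ← hY_succ, inner_self_eq_norm_sq,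
        hnorm]
  have hpow (n : ℕ) : (T ^ n) (Y n) = y := by
    induction n with
    | zero => rfl
    | succ n ih => rw [pow_succ, mul_apply_eq_comp, hchain, ih]
  rw [eq_bot_iff] at hT_analytic
  exact (Submodule.mem_bot ℂ).1 (hT_analytic (Submodule.mem_iInf _ |>.2 fun n => ⟨Y n, hpow n⟩))

end Compression

theorem eq_invGen_wanderingPart {T : H →L[ℂ] H} {K : NNReal} (hT_anti : AntilipschitzWith K T)
    (hT_norm : ‖T‖ ≤ 1)
    (hT_ineq : ∀ v z x : H, 2 * re ⟪T v, z + T x⟫_ℂ ≤ 2 * ‖T v‖ ^ 2 + ‖T z‖ ^ 2 + ‖x‖ ^ 2)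
    (hT_analytic : ⨅ n : ℕ, LinearMap.range ((T ^ n : H →L[ℂ] H) : H →ₗ[ℂ] H) = ⊥)
    {N : Submodule ℂ H} (hN : IsClosed (N : Set H)) (hNinv : ∀ x ∈ N, T x ∈ N) :
    N = invGen T (wanderingPart T N) := by
  have : CompleteSpace N := hN.completeSpace_coe
  have hTN : IsClosed (N.map (T : H →ₗ[ℂ] H) : Set H) := by
    rw [Submodule.map_coe]
    exact (hT_anti.isClosedEmbedding T.uniformContinuous).isClosedMap _ hN
  have : CompleteSpace (N.map (T : H →ₗ[ℂ] H)) := hTN.completeSpace_coe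
  set W := invGen T (wanderingPart T N)
  have : CompleteSpace W := (isClosed_invGen T _).completeSpace_coe
  have hWN : W ≤ N := invGen_le hN hNinv inf_le_left
  have hNW : N ⊓ Wᗮ = ⊥ := eq_bot_iff.2 fun y hy =>
    eq_zero_of_mem_orthogonal_of_wanderingPart_le hT_norm hT_ineq hT_analytic hNinv hWN
      (fun _ => apply_mem_invGen) (subset_invGen T _) hy.1 hy.2
  refine le_antisymm (fun y hy => ?_) hWN
  refine Submodule.mem_of_mem_orthogonal_inf_orthogonal hWN hy ?_
  rw [hNW, Submodule.bot_orthogonal_eq_top]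
  trivial

end WanderingSubspace

theorem HasSum.nat_add_of_eq_zero {G : Type*} [AddCommGroup G] [TopologicalSpace G]
    [IsTopologicalAddGroup G] {f : ℕ → G} {a : G} (h : HasSum f a) {k : ℕ}
    (hf : ∀ n < k, f n = 0) : HasSum (fun n => f (n + k)) a := by
  rwa [hasSum_nat_add_iff, Finset.sum_eq_zero fun n hn => hf n (Finset.mem_range.1 hn),
    add_zero]

theorem hasSum_integral_countable {X E : Type*} [MeasurableSpace X] [MeasurableSingletonClass X]
    [Countable X] [NormedAddCommGroup E] [NormedSpace ℝ E] [CompleteSpace E] {μ : Measure X}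
    {f : X → E} (hf : Integrable f μ) : HasSum (fun x => μ.real {x} • f x) (∫ x, f x ∂μ) := by
  rw [← Measure.sum_smul_dirac μ] at hf ⊢
  convert hasSum_integral_measure hf using 2 with x
  rw [integral_smul_measure, integral_dirac, Measure.sum_smul_dirac, measureReal_def]

noncomputable def dirichletWeight (α : ℝ) (n : ℕ) : ℝ := ((n : ℝ) + 1) ^ α

section DirichletWeight

variable {α : ℝ}

theorem dirichletWeight_pos (α : ℝ) (n : ℕ) : 0 < dirichletWeight α n := by
  unfold dirichletWeight
  positivity

theorem dirichletWeight_eq_inv (α : ℝ) (n : ℕ) :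
    dirichletWeight α n = (((n : ℝ) + 1) ^ (-α))⁻¹ := by
  rw [dirichletWeight, Real.rpow_neg (by positivity), inv_inv]

theorem dirichletWeight_antitone (hα : α ≤ 0) : Antitone (dirichletWeight α) :=
  fun _ _ h => Real.rpow_le_rpow_of_nonpos (by positivity) (by gcongr) hα

theorem dirichletWeight_le_mul_add (hα : α ≤ 0) (m k : ℕ) :
    dirichletWeight α m ≤ ((k : ℝ) + 1) ^ (-α) * dirichletWeight α (m + k) := by
  rw [dirichletWeight_eq_inv, dirichletWeight_eq_inv, ← div_eq_mul_inv,
    inv_le_iff_one_le_mul₀' (by positivity), ← mul_div_assoc, le_div_iff₀ (by positivity), one_mul,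
    ← Real.mul_rpow (by positivity) (by positivity)]
  refine Real.rpow_le_rpow (by positivity) ?_ (by linarith)
  push_cast
  nlinarith [(m.cast_nonneg : (0 : ℝ) ≤ m), (k.cast_nonneg : (0 : ℝ) ≤ k)]

theorem dirichletWeight_div_add_div_le_two (hα₁ : -1 ≤ α) (hα₀ : α ≤ 0) (m k : ℕ) :
    dirichletWeight α (m + k) / dirichletWeight α m +
      dirichletWeight α (m + k) / dirichletWeight α (m + k + k) ≤ 2 := by
  have hconc := (Real.concaveOn_rpow (p := -α) (by linarith) (by linarith)).2
    (Set.mem_Ici.2 (by positivity : (0 : ℝ) ≤ m + 1))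
    (Set.mem_Ici.2 (by positivity : (0 : ℝ) ≤ m + k + k + 1))
    (by norm_num : (0 : ℝ) ≤ 1 / 2) (by norm_num : (0 : ℝ) ≤ 1 / 2) (by norm_num)
  simp only [smul_eq_mul] at hconc
  rw [show 1 / 2 * ((m : ℝ) + 1) + 1 / 2 * ((m : ℝ) + k + k + 1) = (m : ℝ) + k + 1 by ring]
    at hconc
  simp only [dirichletWeight_eq_inv, Nat.cast_add, div_eq_mul_inv, inv_inv]
  rw [← mul_add, inv_mul_le_iff₀ (by positivity)]
  linarith

end DirichletWeight

theorem dirichletMeasure_real_singleton (α : ℝ) (n : ℕ) :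
    (dirichletMeasure α).real {n} = dirichletWeight α n := by
  rw [measureReal_def, dirichletMeasure, withDensity_apply _ (MeasurableSet.singleton n),
    lintegral_singleton, Measure.count_singleton, mul_one]
  exact ENNReal.toReal_ofReal (dirichletWeight_pos α n).le

namespace Dspace

variable {α : ℝ}

theorem hasSum_re_inner (f g : Dspace α) :
    HasSum (fun n => dirichletWeight α n * re ⟪f n, g n⟫_ℂ) (re ⟪f, g⟫_ℂ) := by
  have h := (hasSum_integral_countable (L2.integrable_inner (𝕜 := ℂ) f g)).mapL reCLM
  simpa only [dirichletMeasure_real_singleton, reCLM_apply, smul_re, ← L2.inner_def] using h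

theorem hasSum_norm_sq (f : Dspace α) :
    HasSum (fun n => dirichletWeight α n * ‖f n‖ ^ 2) (‖f‖ ^ 2) := by
  simpa only [inner_self_eq_norm_sq] using hasSum_re_inner f f

end Dspace

namespace IsShiftBy

variable {α : ℝ} {k : ℕ} {T : Dspace α →L[ℂ] Dspace α}

theorem apply_add (hT : IsShiftBy α k T) (f : Dspace α) (m : ℕ) : T f (m + k) = f m := by
  simp [hT f]

theorem apply_of_lt (hT : IsShiftBy α k T) (f : Dspace α) {n : ℕ} (hn : n < k) : T f n = 0 := by
  simp [hT f, hn]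

theorem hasSum_re_inner_left (hT : IsShiftBy α k T) (v z : Dspace α) :
    HasSum (fun m => dirichletWeight α (m + k) * re ⟪v m, z (m + k)⟫_ℂ) (re ⟪T v, z⟫_ℂ) := by
  have h := (Dspace.hasSum_re_inner (T v) z).nat_add_of_eq_zero (k := k) fun n hn => by
    rw [hT.apply_of_lt v hn, inner_zero_left, map_zero, mul_zero]
  simpa only [hT.apply_add] using h

theorem hasSum_norm_sq_apply (hT : IsShiftBy α k T) (v : Dspace α) :
    HasSum (fun m => dirichletWeight α (m + k) * ‖v m‖ ^ 2) (‖T v‖ ^ 2) := by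
  simpa only [hT.apply_add, inner_self_eq_norm_sq] using hT.hasSum_re_inner_left v (T v)

theorem norm_apply_le (hT : IsShiftBy α k T) (hα : α ≤ 0) (f : Dspace α) : ‖T f‖ ≤ ‖f‖ := by
  refine (pow_le_pow_iff_left₀ (norm_nonneg _) (norm_nonneg _) two_ne_zero).1 ?_
  exact hasSum_le (fun m => mul_le_mul_of_nonneg_right
    (dirichletWeight_antitone hα (Nat.le_add_right m k)) (sq_nonneg _))
    (hT.hasSum_norm_sq_apply f) (Dspace.hasSum_norm_sq f)

theorem opNorm_le_one (hT : IsShiftBy α k T) (hα : α ≤ 0) : ‖T‖ ≤ 1 :=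
  T.opNorm_le_bound zero_le_one fun f => by simpa using hT.norm_apply_le hα f

theorem norm_le_mul_norm_apply (hT : IsShiftBy α k T) (hα : α ≤ 0) (f : Dspace α) :
    ‖f‖ ≤ √(((k : ℝ) + 1) ^ (-α)) * ‖T f‖ := by
  rw [← Real.sqrt_sq (norm_nonneg f), ← Real.sqrt_sq (norm_nonneg (T f)),
    ← Real.sqrt_mul' _ (sq_nonneg _)]
  refine Real.sqrt_le_sqrt (hasSum_le (fun m => ?_) (Dspace.hasSum_norm_sq f)
    ((hT.hasSum_norm_sq_apply f).mul_left _))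
  rw [← mul_assoc]
  exact mul_le_mul_of_nonneg_right (dirichletWeight_le_mul_add hα m k) (sq_nonneg _)

theorem antilipschitz (hT : IsShiftBy α k T) (hα : α ≤ 0) :
    AntilipschitzWith ⟨√(((k : ℝ) + 1) ^ (-α)), Real.sqrt_nonneg _⟩ T :=
  T.antilipschitz_of_bound (hT.norm_le_mul_norm_apply hα)

theorem apply_pow_eq_zero (hT : IsShiftBy α k T) (f : Dspace α) {n m : ℕ} (hm : m < n * k) :
    (T ^ n) f m = 0 := by
  induction n generalizing m with
  | zero => simp at hm
  | succ n ih =>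
    rw [pow_succ', mul_apply_eq_comp, hT]
    split_ifs with hkm
    · exact ih (by rw [Nat.succ_mul] at hm; omega)
    · rfl

theorem iInf_range_pow_eq_bot (hT : IsShiftBy α k T) (hk : 1 ≤ k) :
    ⨅ n : ℕ, LinearMap.range ((T ^ n : Dspace α →L[ℂ] Dspace α) : Dspace α →ₗ[ℂ] Dspace α) =
      ⊥ := by
  refine eq_bot_iff.2 fun f hf => (Submodule.mem_bot ℂ).2 ?_
  rw [Lp.eq_zero_iff_ae_eq_zero]
  refine ae_of_all _ fun m => ?_
  obtain ⟨g, rfl⟩ := (Submodule.mem_iInf _).1 hf (m + 1)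
  exact hT.apply_pow_eq_zero g (by nlinarith)

theorem two_mul_re_inner_add_le (hT : IsShiftBy α k T) (hα₁ : -1 ≤ α) (hα₀ : α ≤ 0)
    (v z x : Dspace α) : 2 * re ⟪T v, z + T x⟫_ℂ ≤ 2 * ‖T v‖ ^ 2 + ‖T z‖ ^ 2 + ‖x‖ ^ 2 := by
  set w := dirichletWeight α
  have hlhs : HasSum
      (fun m => 2 * (w (m + k) * re ⟪v m, z (m + k)⟫_ℂ + w (m + k) * re ⟪v m, x m⟫_ℂ))
      (2 * re ⟪T v, z + T x⟫_ℂ) := by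
    rw [inner_add_right, map_add]
    refine ((hT.hasSum_re_inner_left v z).add ?_).mul_left 2
    simpa only [hT.apply_add] using hT.hasSum_re_inner_left v (T x)
  have htail := (hasSum_nat_add_iff' (k := k) (f := fun n => w (n + k) * ‖z n‖ ^ 2)).2
    (hT.hasSum_norm_sq_apply z)
  have hrhs := (((hT.hasSum_norm_sq_apply v).mul_left 2).add htail).add (Dspace.hasSum_norm_sq x)
  refine (hasSum_le (fun m => ?_) hlhs hrhs).trans ?_
  · exact two_mul_re_inner_add_re_inner_le (dirichletWeight_pos α m) (dirichletWeight_pos α _)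
      (dirichletWeight_pos α _) (dirichletWeight_div_add_div_le_two hα₁ hα₀ m k) _ _ _
  · have : 0 ≤ ∑ i ∈ Finset.range k, w (i + k) * ‖z i‖ ^ 2 := Finset.sum_nonneg fun i _ =>
      mul_nonneg (dirichletWeight_pos α _).le (sq_nonneg _)
    linarith

end IsShiftBy

theorem monomial_wandering_on_shifted_subspace_general
    (k : ℕ) (hk : 1 ≤ k) (α : ℝ) (hα : α ∈ Set.Icc (-1 : ℝ) 0)
    (T : Dspace α →L[ℂ] Dspace α) (hT : IsShiftBy α k T)
    (N : Submodule ℂ (Dspace α)) (hNclosed : IsClosed (N : Set (Dspace α)))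
    (hNinv : ∀ f ∈ N, T f ∈ N) :
    N = invGen T ↑(wanderingPart T N) :=
  eq_invGen_wanderingPart (hT.antilipschitz hα.2) (hT.opNorm_le_one hα.2)
    (hT.two_mul_re_inner_add_le hα.1 hα.2) (hT.iInf_range_pow_eq_bot hk) hNclosed hNinv

/-- For `k ≥ 1` and `α ∈ [-1,0]`, multiplication by `z^k` has the wandering subspace
property in the subspace `z^k D_α = {f ∈ D_α : a₀ = ⋯ = a_{k-1} = 0}`: every closed
`M_{z^k}`-invariant subspace `N ⊆ z^k D_α` satisfies `N = [N ⊖ z^k N]_{M_{z^k}}`. -/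
theorem monomial_wandering_on_shifted_subspace
    (k : ℕ) (hk : 1 ≤ k) (α : ℝ) (hα : α ∈ Set.Icc (-1 : ℝ) 0)
    (T : Dspace α →L[ℂ] Dspace α) (hT : IsShiftBy α k T)
    (N : Submodule ℂ (Dspace α)) (hNclosed : IsClosed (N : Set (Dspace α)))
    (hNsub : ∀ f ∈ N, ∀ n < k, (f : ℕ → ℂ) n = 0)
    (hNinv : ∀ f ∈ N, T f ∈ N) :
    N = invGen T ↑(wanderingPart T N) :=
  monomial_wandering_on_shifted_subspace_general k hk α hα T hT N hNclosed hNinv
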